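/- Let F be a strictly 1-balanced graph on r ≥ 3 vertices, let C be a sparse clean F-cycle, and let G be the clean d-cycle consisting of the shadow graph of C (which has v(G) = 2(r−1) vertices and 2e(F)−1 usual edges) together with the single dummy edge C, so that e(G) = 2e(F) and e(G)/v(G) = d_1(F). Then every proper sub-d-graph S of G with at least one edge satisfies e(S)/v(S) < e(G)/v(G); that is, G is strictly balanced. -/

import Mathlib

open scoped Classical
open Filter Asymptotics

noncomputable section

/-! ### Basic graph quantities -/

/-- The number of edges of a simple graph. -/
def edgeCnt {V : Type*} (G : SimpleGraph V) : ℕ := G.edgeSet.ncard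

/-- The 1-density `e(F)/(v(F)-1)` of a graph `F` on `r` vertices. -/
def d1 {r : ℕ} (F : SimpleGraph (Fin r)) : ℝ := (edgeCnt F : ℝ) / ((r : ℝ) - 1)

/-- `F` is strictly 1-balanced: every proper subgraph `S` with at least 2 vertices and at
least one edge satisfies `d₁(S) < d₁(F)`. -/
def Strictly1Balanced {r : ℕ} (F : SimpleGraph (Fin r)) : Prop :=
  ∀ S : F.Subgraph, S ≠ ⊤ → 2 ≤ S.verts.ncard → 1 ≤ S.edgeSet.ncard →
    (S.edgeSet.ncard : ℝ) / ((S.verts.ncard : ℝ) - 1) < d1 F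

/-- The number of automorphisms of `F`. -/
def autCard {r : ℕ} (F : SimpleGraph (Fin r)) : ℕ := Nat.card (F ≃g F)

/-! ### Copies of `F` in a graph, `F`-factors, `F`-isolated vertices -/

/-- `φ` is a copy of `F` in `G` (an embedding of `F` as a not necessarily induced subgraph). -/
def IsCopyIn {r n : ℕ} (F : SimpleGraph (Fin r)) (G : SimpleGraph (Fin n))
    (φ : Fin r ↪ Fin n) : Prop :=
  ∀ u v, F.Adj u v → G.Adj (φ u) (φ v)

/-- `G` contains an `F`-factor: pairwise vertex-disjoint copies of `F` covering all vertices. -/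
def HasFFactor {r n : ℕ} (F : SimpleGraph (Fin r)) (G : SimpleGraph (Fin n)) : Prop :=
  ∃ Φ : Finset (Fin r ↪ Fin n),
    (∀ φ ∈ Φ, IsCopyIn F G φ) ∧
    (∀ φ ∈ Φ, ∀ ψ ∈ Φ, φ ≠ ψ → ∀ x : Fin n, ¬(x ∈ Set.range φ ∧ x ∈ Set.range ψ)) ∧
    (∀ x : Fin n, ∃ φ ∈ Φ, x ∈ Set.range φ)

/-- Vertex `x` is `F`-isolated in `G`: no copy of `F` in `G` contains `x`. -/
def FIsolated {r n : ℕ} (F : SimpleGraph (Fin r)) (G : SimpleGraph (Fin n)) (x : Fin n) : Prop :=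
  ∀ φ : Fin r ↪ Fin n, IsCopyIn F G φ → x ∉ Set.range φ

/-! ### The random graph `G(n,p)` -/

/-- Probability of the event `P` in the Erdős–Rényi random graph `G(n,p)`. -/
def gnpProb (n : ℕ) (p : ℝ) (P : SimpleGraph (Fin n) → Prop) : ℝ :=
  ∑ G : SimpleGraph (Fin n),
    if P G then p ^ edgeCnt G * (1 - p) ^ (n.choose 2 - edgeCnt G) else 0

/-- The sharp threshold `p* = ((aut F / r!) · ln n / C(n-1, r-1))^(1/e(F))`. -/
def pstar {r : ℕ} (F : SimpleGraph (Fin r)) (n : ℕ) : ℝ :=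
  ((autCard F : ℝ) / (r.factorial : ℝ) * Real.log n / ((n - 1).choose (r - 1) : ℝ)) ^
    ((1 : ℝ) / (edgeCnt F : ℝ))

/-! ### `F`-edges and `F`-graphs -/

/-- An `F`-edge: a pair (vertex set, edge set); the copies of `F` among these are singled out
by `FEdge.IsCopyOf`. -/
abbrev FEdge (V : Type*) := Finset V × Finset (Sym2 V)

/-- `h` is a copy of `F` with vertices in `V`. -/
def FEdge.IsCopyOf {r : ℕ} {V : Type*} (h : FEdge V) (F : SimpleGraph (Fin r)) : Prop :=
  ∃ φ : Fin r → V, Function.Injective φ ∧ (↑h.1 : Set V) = Set.range φ ∧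
    (↑h.2 : Set (Sym2 V)) = Sym2.map φ '' F.edgeSet

/-- An `F`-graph: a vertex set together with a set of `F`-edges. -/
abbrev FGraph (V : Type*) := Finset V × Finset (FEdge V)

/-- Well-formedness of an `F`-graph w.r.t. `F`: every `F`-edge is a copy of `F` with
vertices inside the vertex set. -/
def FGraph.Wf {r : ℕ} {V : Type*} (H : FGraph V) (F : SimpleGraph (Fin r)) : Prop :=
  ∀ h ∈ H.2, FEdge.IsCopyOf h F ∧ h.1 ⊆ H.1

/-- The edge set of the shadow graph of an `F`-graph. -/
def shadowEdges {V : Type*} [DecidableEq V] (H : FGraph V) : Finset (Sym2 V) :=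
  H.2.sup Prod.snd

/-- The shadow graph of an `F`-graph. -/
def shadow {V : Type*} [DecidableEq V] (H : FGraph V) : SimpleGraph V :=
  SimpleGraph.fromEdgeSet ↑(shadowEdges H)

/-- Number of connected components of the shadow graph of `H` (on the vertex set of `H`). -/
def compCount {V : Type*} [DecidableEq V] (H : FGraph V) : ℕ :=
  Nat.card ((shadow H).induce (↑H.1 : Set V)).ConnectedComponent

/-- An `F`-graph is connected if its shadow graph is. -/
def FGraphConnected {V : Type*} [DecidableEq V] (H : FGraph V) : Prop :=
  ((shadow H).induce (↑H.1 : Set V)).Connected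

/-- The nullity `n(H) = (r-1)e(H) + c(H) - v(H)` of an `F`-graph. -/
def nullity (r : ℕ) {V : Type*} [DecidableEq V] (H : FGraph V) : ℤ :=
  ((r : ℤ) - 1) * H.2.card + compCount H - H.1.card

/-- An avoidable configuration: a connected `F`-graph of nullity at least 2. -/
def Avoidable {r : ℕ} {V : Type*} [DecidableEq V] (F : SimpleGraph (Fin r))
    (H : FGraph V) : Prop :=
  FGraph.Wf H F ∧ FGraphConnected H ∧ 2 ≤ nullity r H

/-- The `F`-edge `h` is induced by the `F`-graph `H`: it is a copy of `F`, not an `F`-edge of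
`H`, but all its edges lie in the shadow graph of `H`. -/
def InducedBy {r : ℕ} {V : Type*} [DecidableEq V] (F : SimpleGraph (Fin r)) (h : FEdge V)
    (H : FGraph V) : Prop :=
  FEdge.IsCopyOf h F ∧ h ∉ H.2 ∧ h.2 ⊆ shadowEdges H

/-- `C` is a clean `F`-cycle of length `k`. -/
def IsCleanCycleOfLen {r : ℕ} {V : Type*} [DecidableEq V] (F : SimpleGraph (Fin r))
    (C : FGraph V) (k : ℕ) : Prop :=
  FGraph.Wf C F ∧ C.1 = C.2.sup Prod.fst ∧
  ((k = 2 ∧ ∃ h₁ h₂ : FEdge V, h₁ ≠ h₂ ∧ C.2 = {h₁, h₂} ∧ (h₁.1 ∩ h₂.1).card = 2) ∨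
   (3 ≤ k ∧ ∃ h : Fin k → FEdge V, Function.Injective h ∧ C.2 = Finset.image h Finset.univ ∧
     ∃ v : Fin k → V, Function.Injective v ∧
       (∀ i j : Fin k, ((i : ℕ) + 1) % k = (j : ℕ) → (h i).1 ∩ (h j).1 = {v i}) ∧
       (∀ i j : Fin k, i ≠ j → ((i : ℕ) + 1) % k ≠ (j : ℕ) → ((j : ℕ) + 1) % k ≠ (i : ℕ) →
         (h i).1 ∩ (h j).1 = ∅)))

/-- `C` is a clean `F`-cycle (of some length `k ≥ 2`). -/
def IsCleanCycle {r : ℕ} {V : Type*} [DecidableEq V] (F : SimpleGraph (Fin r))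
    (C : FGraph V) : Prop :=
  ∃ k, IsCleanCycleOfLen F C k

/-- `C` is a sparse clean `F`-cycle: a clean `F`-cycle of length 2 whose two overlap vertices
form an edge of both of its `F`-edges. -/
def IsSparse {r : ℕ} {V : Type*} [DecidableEq V] (F : SimpleGraph (Fin r))
    (C : FGraph V) : Prop :=
  IsCleanCycleOfLen F C 2 ∧ ∃ h₁ h₂ : FEdge V, h₁ ≠ h₂ ∧ C.2 = {h₁, h₂} ∧
    ∃ x y : V, x ≠ y ∧ h₁.1 ∩ h₂.1 = {x, y} ∧ s(x, y) ∈ h₁.2 ∧ s(x, y) ∈ h₂.2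

/-! ### The random `F`-graph `H_F(n,π)` -/

/-- All potential `F`-edges on the vertex set `Fin n`. -/
def allFEdges (r n : ℕ) (F : SimpleGraph (Fin r)) : Finset (FEdge (Fin n)) :=
  Finset.univ.filter fun h => FEdge.IsCopyOf h F

/-- Expectation of `X` under the random `F`-graph `H_F(n,π)`, whose `F`-edge set is a random
subset of `allFEdges r n F`, each `F`-edge present independently with probability `π`. -/
def hfExp (r n : ℕ) (F : SimpleGraph (Fin r)) (π : ℝ)
    (X : Finset (FEdge (Fin n)) → ℝ) : ℝ :=
  ∑ S ∈ (allFEdges r n F).powerset,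
    π ^ S.card * (1 - π) ^ ((allFEdges r n F).card - S.card) * X S

/-- Probability of `P` under the random `F`-graph `H_F(n,π)`. -/
def hfProb (r n : ℕ) (F : SimpleGraph (Fin r)) (π : ℝ)
    (P : Finset (FEdge (Fin n)) → Prop) : ℝ :=
  hfExp r n F π fun S => if P S then 1 else 0

/-! ### Maps, isomorphisms and copies of `F`-graphs -/

/-- Image of an `F`-edge under a vertex map. -/
def FEdge.map {V W : Type*} [DecidableEq W] (ψ : V → W) (h : FEdge V) : FEdge W :=
  (h.1.image ψ, h.2.image (Sym2.map ψ))

/-- Image of an `F`-graph under a vertex map. -/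
def FGraph.map {V W : Type*} [DecidableEq V] [DecidableEq W] (ψ : V → W)
    (H : FGraph V) : FGraph W :=
  (H.1.image ψ, H.2.image (FEdge.map ψ))

/-- `H` is isomorphic to `K` via a vertex bijection mapping `F`-edges to `F`-edges. -/
def FGraph.IsoTo {V W : Type*} [DecidableEq V] [DecidableEq W] (H : FGraph V)
    (K : FGraph W) : Prop :=
  ∃ ψ : V → W, Set.InjOn ψ ↑H.1 ∧ FGraph.map ψ H = K

/-- The number of copies of the `F`-graph `H` among a set `S` of `F`-edges on `Fin n`. -/
def copyCount {V : Type*} [DecidableEq V] (H : FGraph V) {n : ℕ}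
    (S : Finset (FEdge (Fin n))) : ℕ :=
  Nat.card {K : FGraph (Fin n) // K.2 ⊆ S ∧ FGraph.IsoTo H K}

/-- Union of two `F`-graphs. -/
def FGraph.union {V : Type*} [DecidableEq V] (H K : FGraph V) : FGraph V :=
  (H.1 ∪ K.1, H.2 ∪ K.2)

/-! ### d-graphs and the random d-graph `G*(n,p)` -/

/-- A d-graph: vertices, usual edges, and dummy edges (identified with sparse clean
`F`-cycles). -/
abbrev DGraph (V : Type*) := Finset V × Finset (Sym2 V) × Finset (FGraph V)

/-- All potential usual edges on `Fin n`. -/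
def allUsual (n : ℕ) : Finset (Sym2 (Fin n)) := Finset.univ.filter fun e => ¬e.IsDiag

/-- All potential dummy edges on `Fin n`: the sparse clean `F`-cycles. -/
def allDummies (r n : ℕ) (F : SimpleGraph (Fin r)) : Finset (FGraph (Fin n)) :=
  Finset.univ.filter fun C => IsSparse F C

/-- Expectation of `X` under the random d-graph `G*(n,p)`: each usual edge and each dummy
edge is included independently with probability `p`. -/
def dgExp (r n : ℕ) (F : SimpleGraph (Fin r)) (p : ℝ)
    (X : Finset (Sym2 (Fin n)) → Finset (FGraph (Fin n)) → ℝ) : ℝ :=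
  ∑ U ∈ (allUsual n).powerset, ∑ D ∈ (allDummies r n F).powerset,
    p ^ (U.card + D.card) *
      (1 - p) ^ (((allUsual n).card - U.card) + ((allDummies r n F).card - D.card)) * X U D

/-- Probability of `P` under the random d-graph `G*(n,p)`. -/
def dgProb (r n : ℕ) (F : SimpleGraph (Fin r)) (p : ℝ)
    (P : Finset (Sym2 (Fin n)) → Finset (FGraph (Fin n)) → Prop) : ℝ :=
  dgExp r n F p fun U D => if P U D then 1 else 0

/-- Image of a d-graph under a vertex map. -/
def DGraph.map {V W : Type*} [DecidableEq V] [DecidableEq W] (ψ : V → W)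
    (K : DGraph V) : DGraph W :=
  (K.1.image ψ, K.2.1.image (Sym2.map ψ), K.2.2.image (FGraph.map ψ))

/-- `K` is isomorphic to `L` as a d-graph. -/
def DGraph.IsoTo {V W : Type*} [DecidableEq V] [DecidableEq W] (K : DGraph V)
    (L : DGraph W) : Prop :=
  ∃ ψ : V → W, Set.InjOn ψ ↑K.1 ∧ DGraph.map ψ K = L

/-- The number of copies of the d-graph `K` inside the d-graph on `Fin n` with usual edges
`U` and dummy edges `D`. -/
def dCopyCount {V : Type*} [DecidableEq V] (K : DGraph V) {n : ℕ}
    (U : Finset (Sym2 (Fin n))) (D : Finset (FGraph (Fin n))) : ℕ :=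
  Nat.card {L : DGraph (Fin n) // L.2.1 ⊆ U ∧ L.2.2 ⊆ D ∧ DGraph.IsoTo K L}

/-- Union of two d-graphs. -/
def DGraph.union {V : Type*} [DecidableEq V] (K L : DGraph V) : DGraph V :=
  (K.1 ∪ L.1, K.2.1 ∪ L.2.1, K.2.2 ∪ L.2.2)

/-- `G` is the clean d-cycle corresponding to the clean `F`-cycle `C`: the shadow graph of
`C` if `C` is dense, together with the dummy edge `C` if `C` is sparse. -/
def IsCleanDCycleOf {r : ℕ} {V : Type*} [DecidableEq V] (F : SimpleGraph (Fin r))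
    (G : DGraph V) (C : FGraph V) : Prop :=
  (IsCleanCycle F C ∧ ¬IsSparse F C ∧ G = (C.1, shadowEdges C, (∅ : Finset (FGraph V)))) ∨
  (IsSparse F C ∧ G = (C.1, shadowEdges C, ({C} : Finset (FGraph V))))

/-! A sub-d-graph of the clean d-cycle without its dummy edge splits along the two copies
`h₁`, `h₂` of `F` whose union is the shadow of `C`. Pulled back to `F`, each part is a
subgraph, so strict 1-balancedness gives `e(Uᵢ)(r-1) ≤ e(F)(v(Wᵢ)-1)`, strictly unless `Uᵢ`
is all of `hᵢ`. The copies share only two vertices, so summing gives `e(U)(r-1) ≤ e(F)v(W)`;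
equality is impossible because the shared edge `xy` is either counted twice or missing from
both parts. A sub-d-graph containing the dummy edge spans all vertices, so, being proper, it
misses a usual edge. -/

lemma SimpleGraph.Subgraph.two_le_ncard_verts {α : Type*} [Finite α] {G : SimpleGraph α}
    {S : G.Subgraph} (hS : S.edgeSet.Nonempty) : 2 ≤ S.verts.ncard := by
  obtain ⟨e, he⟩ := hS
  induction e using Sym2.ind with
  | h a b =>
    have hab : S.Adj a b := he
    rw [← Set.ncard_pair hab.ne]
    exact Set.ncard_le_ncard (Set.pair_subset hab.fst_mem hab.snd_mem)

namespace Strictly1Balanced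

variable {r : ℕ} {F : SimpleGraph (Fin r)}

lemma card_edgeSet_mul_lt (hF : Strictly1Balanced F) {S : F.Subgraph} (hS : S ≠ ⊤)
    (hne : S.edgeSet.Nonempty) :
    S.edgeSet.ncard * (r - 1) + edgeCnt F < edgeCnt F * S.verts.ncard := by
  have hv := S.two_le_ncard_verts hne
  have hvr : S.verts.ncard ≤ r := by
    simpa using Set.ncard_le_ncard (Set.subset_univ S.verts)
  have hlt := hF S hS hv (Nat.one_le_iff_ne_zero.mpr ((Set.ncard_pos).mpr hne).ne')
  have hv' : (2 : ℝ) ≤ S.verts.ncard := by exact_mod_cast hv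
  have hr' : (2 : ℝ) ≤ r := by exact_mod_cast hv.trans hvr
  rw [d1, div_lt_div_iff₀ (by linarith) (by linarith)] at hlt
  have : ((S.edgeSet.ncard * (r - 1) + edgeCnt F : ℕ) : ℝ) < (edgeCnt F * S.verts.ncard : ℕ) := by
    push_cast [Nat.cast_sub (show 1 ≤ r by omega)]
    linarith
  exact_mod_cast this

lemma card_edgeSet_mul_le (hF : Strictly1Balanced F) {S : F.Subgraph}
    (hne : S.edgeSet.Nonempty) :
    S.edgeSet.ncard * (r - 1) + edgeCnt F ≤ edgeCnt F * S.verts.ncard := by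
  rcases eq_or_ne S ⊤ with rfl | hS
  · have hr := (⊤ : F.Subgraph).two_le_ncard_verts hne
    simp only [SimpleGraph.Subgraph.edgeSet_top, SimpleGraph.Subgraph.verts_top,
      Set.ncard_univ, Nat.card_eq_fintype_card, Fintype.card_fin] at hr ⊢
    obtain ⟨k, rfl⟩ : ∃ k, r = k + 1 := ⟨r - 1, by omega⟩
    simp [edgeCnt, Nat.mul_succ]
  · exact (hF.card_edgeSet_mul_lt hS hne).le

end Strictly1Balanced

namespace FEdge.IsCopyOf

variable {r : ℕ} {F : SimpleGraph (Fin r)} {V : Type*} {h : FEdge V}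

lemma card_fst (hc : h.IsCopyOf F) : h.1.card = r := by
  obtain ⟨φ, hinj, hv, -⟩ := hc
  rw [← Set.ncard_coe_finset, hv, ← Set.image_univ, Set.ncard_image_of_injective _ hinj,
    Set.ncard_univ, Nat.card_eq_fintype_card, Fintype.card_fin]

lemma card_snd (hc : h.IsCopyOf F) : h.2.card = edgeCnt F := by
  obtain ⟨φ, hinj, -, he⟩ := hc
  rw [← Set.ncard_coe_finset, he, Set.ncard_image_of_injective _ (Sym2.map.injective hinj),
    edgeCnt]

lemma mem_fst_of_mem_snd (hc : h.IsCopyOf F) {e : Sym2 V} (he : e ∈ h.2) {z : V}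
    (hz : z ∈ e) : z ∈ h.1 := by
  obtain ⟨φ, -, hv, hE⟩ := hc
  obtain ⟨e', -, rfl⟩ : e ∈ Sym2.map φ '' F.edgeSet := hE ▸ he
  obtain ⟨a, -, rfl⟩ := Sym2.mem_map.mp hz
  exact (Finset.mem_coe.mp (hv ▸ Set.mem_range_self a :))

lemma not_isDiag (hc : h.IsCopyOf F) {e : Sym2 V} (he : e ∈ h.2) : ¬e.IsDiag := by
  obtain ⟨φ, hinj, -, hE⟩ := hc
  obtain ⟨e', he', rfl⟩ : e ∈ Sym2.map φ '' F.edgeSet := hE ▸ he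
  rw [Sym2.isDiag_map hinj]
  exact F.not_isDiag_of_mem_edgeSet he'

lemma two_le (hc : h.IsCopyOf F) (hne : h.2.Nonempty) : 2 ≤ r := by
  obtain ⟨e, he⟩ := hne
  induction e using Sym2.ind with
  | h a b =>
    have hab : a ≠ b := by simpa using hc.not_isDiag he
    rw [← hc.card_fst]
    exact Finset.one_lt_card.mpr ⟨a, hc.mem_fst_of_mem_snd he (Sym2.mem_mk_left a b),
      b, hc.mem_fst_of_mem_snd he (Sym2.mem_mk_right a b), hab⟩

variable [DecidableEq V]

lemma inter_snd_eq_singleton {h' : FEdge V} (hc : h.IsCopyOf F)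
    (hc' : h'.IsCopyOf F) {x y : V} (hV : h.1 ∩ h'.1 = {x, y}) (hxy : s(x, y) ∈ h.2)
    (hxy' : s(x, y) ∈ h'.2) : h.2 ∩ h'.2 = {s(x, y)} := by
  refine Finset.eq_singleton_iff_unique_mem.mpr ⟨Finset.mem_inter.mpr ⟨hxy, hxy'⟩, ?_⟩
  intro e he
  obtain ⟨he, he'⟩ := Finset.mem_inter.mp he
  have hmem : ∀ z ∈ e, z = x ∨ z = y := fun z hz => by
    have hz : z ∈ h.1 ∩ h'.1 :=
      Finset.mem_inter.mpr ⟨hc.mem_fst_of_mem_snd he hz, hc'.mem_fst_of_mem_snd he' hz⟩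
    simpa [hV] using hz
  induction e using Sym2.ind with
  | h a b =>
    have hab : a ≠ b := by simpa using hc.not_isDiag he
    rcases hmem a (Sym2.mem_mk_left a b) with rfl | rfl <;>
      rcases hmem b (Sym2.mem_mk_right a b) with rfl | rfl
    all_goals first | exact absurd rfl hab | rfl | exact Sym2.eq_swap

lemma exists_subgraph (hc : h.IsCopyOf F) {W : Finset V} {A : Finset (Sym2 V)}
    (hA : A ⊆ h.2) (hAW : ∀ e ∈ A, ∀ z ∈ e, z ∈ W) :
    ∃ S : F.Subgraph, S.edgeSet.ncard = A.card ∧ S.verts.ncard = (W ∩ h.1).card ∧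
      (S = ⊤ → A = h.2) := by
  obtain ⟨φ, hinj, hv, hE⟩ := hc
  let S : F.Subgraph :=
    { verts := φ ⁻¹' W
      Adj := fun u v => F.Adj u v ∧ s(φ u, φ v) ∈ A
      adj_sub := And.left
      edge_vert := fun hadj => hAW _ hadj.2 _ (Sym2.mem_mk_left _ _)
      symm := ⟨fun _ _ hadj => ⟨hadj.1.symm, Sym2.eq_swap ▸ hadj.2⟩⟩ }
  have himg : Sym2.map φ '' S.edgeSet = A := by
    ext e
    constructor
    · rintro ⟨e', he', rfl⟩
      induction e' using Sym2.ind with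
      | h a b => exact he'.2
    · intro heA
      obtain ⟨e', he', rfl⟩ : e ∈ Sym2.map φ '' F.edgeSet := hE ▸ hA heA
      induction e' using Sym2.ind with
      | h a b => exact ⟨s(a, b), ⟨he', heA⟩, rfl⟩
  refine ⟨S, ?_, ?_, fun hS => Finset.coe_injective ?_⟩
  · rw [← Set.ncard_coe_finset, ← himg, Set.ncard_image_of_injective _ (Sym2.map.injective hinj)]
  · rw [← Set.ncard_coe_finset, Finset.coe_inter, hv, ← Set.image_preimage_eq_inter_range,
      Set.ncard_image_of_injective _ hinj]
  · rw [hE, ← himg, hS, SimpleGraph.Subgraph.edgeSet_top]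

variable {W : Finset V} {A : Finset (Sym2 V)}

lemma card_mul_le (hF : Strictly1Balanced F) (hc : h.IsCopyOf F) (hA : A ⊆ h.2)
    (hAW : ∀ e ∈ A, ∀ z ∈ e, z ∈ W) (hne : A.Nonempty) :
    A.card * (r - 1) + edgeCnt F ≤ edgeCnt F * (W ∩ h.1).card := by
  obtain ⟨S, hSE, hSV, -⟩ := hc.exists_subgraph hA hAW
  rw [← hSE, ← hSV]
  exact hF.card_edgeSet_mul_le ((Set.ncard_pos).mp (hSE ▸ hne.card_pos))

lemma card_mul_lt (hF : Strictly1Balanced F) (hc : h.IsCopyOf F) (hA : A ⊆ h.2)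
    (hAW : ∀ e ∈ A, ∀ z ∈ e, z ∈ W) (hne : A.Nonempty) (hAh : A ≠ h.2) :
    A.card * (r - 1) + edgeCnt F < edgeCnt F * (W ∩ h.1).card := by
  obtain ⟨S, hSE, hSV, hS⟩ := hc.exists_subgraph hA hAW
  rw [← hSE, ← hSV]
  exact hF.card_edgeSet_mul_lt (mt hS hAh) ((Set.ncard_pos).mp (hSE ▸ hne.card_pos))

lemma card_mul_lt_card (hF : Strictly1Balanced F) (hc : h.IsCopyOf F) (hA : A ⊆ h.2)
    (hAW : ∀ e ∈ A, ∀ z ∈ e, z ∈ W) (hne : A.Nonempty) :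
    A.card * (r - 1) < edgeCnt F * W.card := by
  have he : 0 < edgeCnt F := hc.card_snd ▸ (hne.mono hA).card_pos
  calc A.card * (r - 1) < A.card * (r - 1) + edgeCnt F := by omega
    _ ≤ edgeCnt F * (W ∩ h.1).card := hc.card_mul_le hF hA hAW hne
    _ ≤ edgeCnt F * W.card := Nat.mul_le_mul_left _ (Finset.card_le_card Finset.inter_subset_left)

end FEdge.IsCopyOf

section

variable {r : ℕ} {F : SimpleGraph (Fin r)} {V : Type*} [DecidableEq V]

lemma card_mul_lt_of_subset_union (hF : Strictly1Balanced F) {h₁ h₂ : FEdge V}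
    (hc₁ : h₁.IsCopyOf F) (hc₂ : h₂.IsCopyOf F) (hV : (h₁.1 ∩ h₂.1).card ≤ 2)
    (hE : (h₁.2 ∩ h₂.2).Nonempty) {W : Finset V} {U : Finset (Sym2 V)}
    (hU : U ⊆ h₁.2 ∪ h₂.2) (hUW : ∀ e ∈ U, ∀ z ∈ e, z ∈ W) (hne : U.Nonempty) :
    U.card * (r - 1) < edgeCnt F * W.card := by
  have hUW' : ∀ {s}, ∀ e ∈ U ∩ s, ∀ z ∈ e, z ∈ W := fun e he =>
    hUW e (Finset.mem_of_mem_inter_left he)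
  rcases (U ∩ h₁.2).eq_empty_or_nonempty with hU₁ | hne₁
  · refine hc₂.card_mul_lt_card hF (fun e he => ?_) hUW hne
    refine (Finset.mem_union.mp (hU he)).resolve_left fun he₁ => ?_
    exact Finset.notMem_empty e (hU₁ ▸ Finset.mem_inter.mpr ⟨he, he₁⟩)
  rcases (U ∩ h₂.2).eq_empty_or_nonempty with hU₂ | hne₂
  · refine hc₁.card_mul_lt_card hF (fun e he => ?_) hUW hne
    refine (Finset.mem_union.mp (hU he)).resolve_right fun he₂ => ?_
    exact Finset.notMem_empty e (hU₂ ▸ Finset.mem_inter.mpr ⟨he, he₂⟩)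
  have hsplit : U.card + (U ∩ h₁.2 ∩ (U ∩ h₂.2)).card = (U ∩ h₁.2).card + (U ∩ h₂.2).card := by
    rw [← Finset.card_union_add_card_inter (U ∩ h₁.2), ← Finset.inter_union_distrib_left,
      Finset.inter_eq_left.mpr hU]
  have hW : edgeCnt F * (W ∩ h₁.1).card + edgeCnt F * (W ∩ h₂.1).card
      ≤ edgeCnt F * W.card + 2 * edgeCnt F := by
    rw [← mul_add, ← Finset.card_union_add_card_inter, mul_comm 2, ← mul_add]
    gcongr
    · exact Finset.union_subset Finset.inter_subset_left Finset.inter_subset_left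
    · exact (Finset.card_le_card (Finset.inter_subset_inter
        Finset.inter_subset_right Finset.inter_subset_right)).trans hV
  rcases (U ∩ h₁.2 ∩ (U ∩ h₂.2)).eq_empty_or_nonempty with h₁₂ | h₁₂
  · -- a shared edge of the copies is then missing from `U`, so neither part is a whole copy
    obtain ⟨e₀, he₀⟩ := hE
    obtain ⟨he₀₁, he₀₂⟩ := Finset.mem_inter.mp he₀
    have he₀U : e₀ ∉ U := fun he => Finset.notMem_empty e₀ (h₁₂ ▸ Finset.mem_inter.mpr
      ⟨Finset.mem_inter.mpr ⟨he, he₀₁⟩, Finset.mem_inter.mpr ⟨he, he₀₂⟩⟩)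
    have b₁ := hc₁.card_mul_lt hF Finset.inter_subset_right hUW' hne₁ fun h =>
      he₀U (Finset.mem_of_mem_inter_left (h ▸ he₀₁ :))
    have b₂ := hc₂.card_mul_lt hF Finset.inter_subset_right hUW' hne₂ fun h =>
      he₀U (Finset.mem_of_mem_inter_left (h ▸ he₀₂ :))
    rw [h₁₂, Finset.card_empty, add_zero] at hsplit
    rw [hsplit, add_mul]
    omega
  · have hr : 2 ≤ r := hc₁.two_le (hne₁.mono Finset.inter_subset_right)
    have hsplit' : U.card * (r - 1) + (r - 1)
        ≤ (U ∩ h₁.2).card * (r - 1) + (U ∩ h₂.2).card * (r - 1) := by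
      rw [← add_mul, ← hsplit, add_mul]
      exact Nat.add_le_add_left (Nat.le_mul_of_pos_left _ h₁₂.card_pos) _
    have b₁ := hc₁.card_mul_le hF Finset.inter_subset_right hUW' hne₁
    have b₂ := hc₂.card_mul_le hF Finset.inter_subset_right hUW' hne₂
    omega

namespace IsSparse

variable {C : FGraph V}

lemma exists_copies (hC : IsSparse F C) :
    ∃ h₁ h₂ : FEdge V, h₁.IsCopyOf F ∧ h₂.IsCopyOf F ∧
      C.1 = h₁.1 ∪ h₂.1 ∧ shadowEdges C = h₁.2 ∪ h₂.2 ∧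
      ∃ x y : V, x ≠ y ∧ h₁.1 ∩ h₂.1 = {x, y} ∧ h₁.2 ∩ h₂.2 = {s(x, y)} := by
  obtain ⟨⟨hwf, hC1, -⟩, h₁, h₂, -, hC2, x, y, hxy, hV, hxy₁, hxy₂⟩ := hC
  have hc₁ := (hwf h₁ (by simp [hC2])).1
  have hc₂ := (hwf h₂ (by simp [hC2])).1
  refine ⟨h₁, h₂, hc₁, hc₂, by simp [hC1, hC2], by simp [shadowEdges, hC2], x, y, hxy, hV,
    hc₁.inter_snd_eq_singleton hc₂ hV hxy₁ hxy₂⟩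

lemma nonempty_copy (hC : IsSparse F C) : ∃ h : FEdge V, h.IsCopyOf F ∧ h.2.Nonempty := by
  obtain ⟨h₁, _, hc₁, -, -, -, x, y, -, -, hE₁₂⟩ := hC.exists_copies
  exact ⟨h₁, hc₁, s(x, y), Finset.mem_of_mem_inter_left (hE₁₂ ▸ Finset.mem_singleton_self _)⟩

lemma two_le (hC : IsSparse F C) : 2 ≤ r :=
  let ⟨_, hc, hne⟩ := hC.nonempty_copy
  hc.two_le hne

lemma one_le_edgeCnt (hC : IsSparse F C) : 1 ≤ edgeCnt F :=
  let ⟨_, hc, hne⟩ := hC.nonempty_copy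
  hc.card_snd ▸ hne.card_pos

lemma card_fst (hC : IsSparse F C) : C.1.card = 2 * (r - 1) := by
  obtain ⟨h₁, h₂, hc₁, hc₂, hV, -, x, y, hxy, hV₁₂, -⟩ := hC.exists_copies
  have := Finset.card_union_add_card_inter h₁.1 h₂.1
  rw [← hV, hV₁₂, Finset.card_pair hxy, hc₁.card_fst, hc₂.card_fst] at this
  omega

lemma card_shadowEdges (hC : IsSparse F C) : (shadowEdges C).card = 2 * edgeCnt F - 1 := by
  obtain ⟨h₁, h₂, hc₁, hc₂, -, hE, _, _, -, -, hE₁₂⟩ := hC.exists_copies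
  have := Finset.card_union_add_card_inter h₁.2 h₂.2
  rw [← hE, hE₁₂, Finset.card_singleton, hc₁.card_snd, hc₂.card_snd] at this
  omega

lemma density_eq (hC : IsSparse F C) :
    (((shadowEdges C).card : ℝ) + 1) / (C.1.card : ℝ) = d1 F := by
  have hr := hC.two_le
  have he := hC.one_le_edgeCnt
  rw [hC.card_shadowEdges, hC.card_fst, d1]
  push_cast [Nat.cast_sub (show 1 ≤ 2 * edgeCnt F by omega), Nat.cast_sub (show 1 ≤ r by omega)]
  rw [sub_add_cancel, mul_div_mul_left _ _ two_ne_zero]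

lemma usual_density_lt (hF : Strictly1Balanced F) (hC : IsSparse F C) {W : Finset V}
    {U : Finset (Sym2 V)} (hU : U ⊆ shadowEdges C) (hUW : ∀ e ∈ U, ∀ z ∈ e, z ∈ W)
    (hne : U.Nonempty) : (U.card : ℝ) / W.card < d1 F := by
  obtain ⟨h₁, h₂, hc₁, hc₂, -, hE, x, y, hxy, hV₁₂, hE₁₂⟩ := hC.exists_copies
  have hlt := card_mul_lt_of_subset_union hF hc₁ hc₂ (by rw [hV₁₂, Finset.card_pair hxy])
    (by simp [hE₁₂]) (hE ▸ hU) hUW hne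
  have hr := hC.two_le
  obtain ⟨e, he⟩ := hne
  have hW : (0 : ℝ) < W.card := by
    induction e using Sym2.ind with
    | h a b => exact_mod_cast Finset.card_pos.mpr ⟨a, hUW _ he a (Sym2.mem_mk_left a b)⟩
  have hr' : (2 : ℝ) ≤ r := by exact_mod_cast hr
  rw [d1, div_lt_div_iff₀ hW (by linarith), ← Nat.cast_pred (by omega)]
  exact_mod_cast hlt

end IsSparse

end

theorem sparse_clean_dcycle_strictly_balanced_general {r : ℕ}
    (F : SimpleGraph (Fin r)) (hF : Strictly1Balanced F) {V : Type*} [DecidableEq V]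
    (C : FGraph V) (hC : IsSparse F C) :
    C.1.card = 2 * (r - 1) ∧
    (shadowEdges C).card = 2 * edgeCnt F - 1 ∧
    (((shadowEdges C).card : ℝ) + 1) / (C.1.card : ℝ) = d1 F ∧
    (∀ (W : Finset V) (U' : Finset (Sym2 V)) (D' : Finset (FGraph V)),
      W ⊆ C.1 → U' ⊆ shadowEdges C → D' ⊆ {C} →
      (∀ e ∈ U', ∀ x ∈ e, x ∈ W) → (∀ Cd ∈ D', Cd.1 ⊆ W) →
      ¬(W = C.1 ∧ U' = shadowEdges C ∧ D' = {C}) → 1 ≤ U'.card + D'.card →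
      ((U'.card : ℝ) + (D'.card : ℝ)) / (W.card : ℝ)
        < (((shadowEdges C).card : ℝ) + 1) / (C.1.card : ℝ)) := by
  refine ⟨hC.card_fst, hC.card_shadowEdges, hC.density_eq, ?_⟩
  intro W U' D' hW hU hD hUW hDW hproper hone
  rcases Finset.subset_singleton_iff.mp hD with rfl | rfl
  · rw [hC.density_eq, Finset.card_empty, Nat.cast_zero, add_zero]
    exact hC.usual_density_lt hF hU hUW (Finset.card_pos.mp (by simpa using hone))
  · obtain rfl : W = C.1 := hW.antisymm (hDW C (Finset.mem_singleton_self C))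
    have hlt : U'.card < (shadowEdges C).card :=
      Finset.card_lt_card (hU.ssubset_of_ne fun h => hproper ⟨rfl, h, rfl⟩)
    rw [Finset.card_singleton, Nat.cast_one]
    have hv : 0 < C.1.card := by have := hC.two_le; rw [hC.card_fst]; omega
    exact div_lt_div_of_pos_right (by exact_mod_cast Nat.add_lt_add_right hlt 1)
      (by exact_mod_cast hv)

/-- The clean d-cycle `G` of a sparse clean `F`-cycle `C` (its shadow
graph, with `2(r-1)` vertices and `2e(F)-1` usual edges, together with the dummy edge `C`,
so `e(G) = 2e(F)` and `e(G)/v(G) = d₁(F)`) is strictly balanced: every proper sub-d-graph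
with at least one edge has strictly smaller density. -/
theorem sparse_clean_dcycle_strictly_balanced {r : ℕ} (hr : 3 ≤ r)
    (F : SimpleGraph (Fin r)) (hF : Strictly1Balanced F) {V : Type*} [DecidableEq V]
    (C : FGraph V) (hC : IsSparse F C) :
    C.1.card = 2 * (r - 1) ∧
    (shadowEdges C).card = 2 * edgeCnt F - 1 ∧
    (((shadowEdges C).card : ℝ) + 1) / (C.1.card : ℝ) = d1 F ∧
    (∀ (W : Finset V) (U' : Finset (Sym2 V)) (D' : Finset (FGraph V)),
      W ⊆ C.1 → U' ⊆ shadowEdges C → D' ⊆ {C} →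
      (∀ e ∈ U', ∀ x ∈ e, x ∈ W) → (∀ Cd ∈ D', Cd.1 ⊆ W) →
      ¬(W = C.1 ∧ U' = shadowEdges C ∧ D' = {C}) → 1 ≤ U'.card + D'.card →
      ((U'.card : ℝ) + (D'.card : ℝ)) / (W.card : ℝ)
        < (((shadowEdges C).card : ℝ) + 1) / (C.1.card : ℝ)) :=
  sparse_clean_dcycle_strictly_balanced_general F hF C hC

end
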